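/- arXiv:1603.01740 — 7 statements merged into one kernel-verified Lean document; each statement's English description precedes it below -/
import Mathlib

section
/- Let F be a forest and let S be a non-empty irreducible routing of F with congestion c. Then the average length of the paths in S is at most 2c; equivalently, the sum of the lengths of the paths in S is at most 2c·|S|. -/
/-!
The total length of the paths is the sum of the loads of the edges of the routing graph `H`
(the union of the paths, a subforest of `F`), each at most `c`, so it suffices to show that `H`
has at most `2|S|` edges.

Cut an edge `uv` of `H`. By induction over the branch `B` of `H` hanging at `v`, the number of
edges of `H` inside `B` plus the load of `uv` is at most the number of path endpoints in `B`:
a path through `uv` either ends at `v` or continues along an edge `vc` to a child `c`, and by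
irreducibility some path through `vc` avoids `uv`, which pays for the edge `vc` itself.
Applying this to both sides of `uv`, the component of `uv` has fewer edges than the paths
inside it have endpoints. Those paths use no other edges, so deleting them leaves an
irreducible routing with exactly the remaining edges, and induction on `S` concludes.
-/

open scoped Finset

namespace SimpleGraph

variable {V : Type*} {G : SimpleGraph V}

lemma Walk.reachable_of_mem_support {u v x : V} (p : G.Walk u v) (hx : x ∈ p.support) :
    G.Reachable u x := by
  classical exact (p.takeUntil x hx).reachable

lemma Walk.IsTrail.exists_ne_mem_edges {a b u v : V} {p : G.Walk a b} (hp : p.IsTrail)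
    (he : s(u, v) ∈ p.edges) (ha : v ≠ a) (hb : v ≠ b) :
    ∃ c, c ≠ u ∧ s(v, c) ∈ p.edges := by
  classical
  by_contra! h
  have hiff : ∀ e ∈ p.edges, v ∈ e ↔ e = s(u, v) := by
    intro e he'
    refine ⟨fun hv => ?_, fun hxy => hxy ▸ Sym2.mem_mk_right u v⟩
    obtain ⟨z, rfl⟩ := Sym2.mem_iff_exists.mp hv
    by_cases hz : z = u
    · rw [hz, Sym2.eq_swap]
    · exact absurd he' (h z hz)
  have hcount : p.edges.countP (fun e => v ∈ e) = p.edges.count s(u, v) := by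
    rw [List.count_eq_countP]
    exact List.countP_congr fun e he' => by simpa using hiff e he'
  have := (hp.even_countP_edges_iff v).mpr fun _ => ⟨ha, hb⟩
  rw [hcount, List.count_eq_one_of_mem hp.edges_nodup he] at this
  exact Nat.not_even_one this

lemma Adj.sym2_mk_ne {u v c : V} (hvc : G.Adj v c) (hcu : c ≠ u) : s(v, c) ≠ s(u, v) := by
  intro h
  rcases Sym2.eq_iff.mp h with ⟨-, rfl⟩ | ⟨-, rfl⟩
  exacts [hvc.ne rfl, hcu rfl]

lemma IsAcyclic.not_reachable_deleteEdges (hG : G.IsAcyclic) {u v : V} (h : G.Adj u v) :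
    ¬ (G.deleteEdges {s(u, v)}).Reachable u v :=
  isBridge_iff.mp (isAcyclic_iff_forall_adj_isBridge.mp hG h)

lemma Reachable.exists_adj_reachable_deleteEdges {v w : V} (h : G.Reachable v w) (hvw : v ≠ w) :
    ∃ c, G.Adj v c ∧ (G.deleteEdges {s(v, c)}).Reachable c w := by
  obtain ⟨p, hp⟩ := h.exists_isPath
  cases p with
  | nil => exact absurd rfl hvw
  | cons hvc q =>
    refine ⟨_, hvc, reachable_deleteEdges_iff_exists_walk.mpr ⟨q, fun he => ?_⟩⟩
    exact ((Walk.cons_isPath_iff _ _).mp hp).2 (q.fst_mem_support_of_mem_edges he)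

lemma Reachable.reachable_deleteEdges_or {u v x : V} (h : G.Reachable x v) :
    (G.deleteEdges {s(u, v)}).Reachable x v ∨ (G.deleteEdges {s(u, v)}).Reachable x u := by
  induction (reachable_iff_reflTransGen x v).mp h
    using Relation.ReflTransGen.head_induction_on with
  | refl => exact .inl .rfl
  | @head x y hxy _ ih =>
    by_cases he : s(x, y) = s(u, v)
    · rcases Sym2.eq_iff.mp he with ⟨rfl, -⟩ | ⟨rfl, -⟩
      · exact .inr .rfl
      · exact .inl .rfl
    · have hxy' : (G.deleteEdges {s(u, v)}).Adj x y := by simp [hxy, he]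
      exact (ih ((reachable_iff_reflTransGen y v).mpr ‹_›)).imp
        hxy'.reachable.trans hxy'.reachable.trans

lemma IsAcyclic.reachable_deleteEdges_of_reachable_deleteEdges (hG : G.IsAcyclic) {u v c w : V}
    (hvc : G.Adj v c) (hcu : c ≠ u) (h : (G.deleteEdges {s(v, c)}).Reachable c w) :
    (G.deleteEdges {s(u, v)}).Reachable v w := by
  obtain ⟨p⟩ := h
  have hv : v ∉ p.support := fun hv =>
    hG.not_reachable_deleteEdges hvc (p.reachable_of_mem_support hv).symm
  have huv : s(u, v) ∉ p.edges := fun he => hv (p.snd_mem_support_of_mem_edges he)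
  have hvc' : (G.deleteEdges {s(u, v)}).Adj v c :=
    deleteEdges_adj.mpr ⟨hvc, hvc.sym2_mk_ne hcu⟩
  exact hvc'.reachable.trans
    ((p.toDeleteEdge _ huv).reachable.mono (deleteEdges_mono (deleteEdges_le _)))

variable [Fintype V] [DecidableEq V]

open scoped Classical in
noncomputable def branch (G : SimpleGraph V) (u v : V) : Finset V :=
  {w | (G.deleteEdges {s(u, v)}).Reachable v w}

open scoped Classical in
noncomputable def children (G : SimpleGraph V) (u v : V) : Finset V :=
  {c | G.Adj v c ∧ c ≠ u}

variable {u v w c : V}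

lemma mem_branch : w ∈ G.branch u v ↔ (G.deleteEdges {s(u, v)}).Reachable v w := by
  simp [branch]

lemma mem_children : c ∈ G.children u v ↔ G.Adj v c ∧ c ≠ u := by
  simp [children]

lemma self_mem_branch : v ∈ G.branch u v := mem_branch.mpr .rfl

lemma IsAcyclic.not_mem_branch (hG : G.IsAcyclic) (h : G.Adj u v) : u ∉ G.branch u v :=
  fun hu => hG.not_reachable_deleteEdges h (mem_branch.mp hu).symm

lemma IsAcyclic.disjoint_branch (hG : G.IsAcyclic) (h : G.Adj u v) :
    Disjoint (G.branch u v) (G.branch v u) := by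
  refine Finset.disjoint_left.mpr fun w hv hu => hG.not_reachable_deleteEdges h ?_
  rw [mem_branch, Sym2.eq_swap] at hu
  exact hu.trans (mem_branch.mp hv).symm

lemma mem_branch_union_branch (h : G.Adj u v) :
    w ∈ G.branch u v ∪ G.branch v u ↔ G.Reachable v w := by
  rw [Finset.mem_union, mem_branch, mem_branch, Sym2.eq_swap (a := v)]
  refine ⟨fun hw => ?_, fun hw => (hw.symm.reachable_deleteEdges_or (u := u)).imp Reachable.symm
    Reachable.symm⟩
  rcases hw with hw | hw
  · exact hw.mono (deleteEdges_le _)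
  · exact h.symm.reachable.trans (hw.mono (deleteEdges_le _))

lemma IsAcyclic.branch_subset_branch (hG : G.IsAcyclic) (hc : c ∈ G.children u v) :
    G.branch v c ⊆ G.branch u v := fun _ hw =>
  mem_branch.mpr <| hG.reachable_deleteEdges_of_reachable_deleteEdges
    (mem_children.mp hc).1 (mem_children.mp hc).2 (mem_branch.mp hw)

lemma IsAcyclic.pairwiseDisjoint_branch (hG : G.IsAcyclic) :
    (G.children u v : Set V).PairwiseDisjoint (G.branch v) := by
  intro c₁ hc₁ c₂ hc₂ hne
  refine Finset.disjoint_left.mpr fun w hw₁ hw₂ => ?_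
  have hvw := hG.reachable_deleteEdges_of_reachable_deleteEdges (u := c₁)
    (mem_children.mp hc₂).1 (Ne.symm hne) (mem_branch.mp hw₂)
  rw [Sym2.eq_swap] at hvw
  exact hG.not_reachable_deleteEdges (mem_children.mp hc₁).1
    (hvw.trans (mem_branch.mp hw₁).symm)

lemma IsAcyclic.branch_eq (hG : G.IsAcyclic) :
    G.branch u v = insert v ((G.children u v).biUnion (G.branch v)) := by
  refine subset_antisymm (fun w hw => ?_) (Finset.insert_subset self_mem_branch
    (Finset.biUnion_subset.mpr fun c hc => hG.branch_subset_branch hc))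
  rcases eq_or_ne v w with rfl | hvw
  · exact Finset.mem_insert_self _ _
  obtain ⟨c, hvc, hcw⟩ := (mem_branch.mp hw).exists_adj_reachable_deleteEdges hvw
  refine Finset.mem_insert_of_mem <|
    Finset.mem_biUnion.mpr ⟨c, mem_children.mpr ⟨?_, ?_⟩, ?_⟩
  · exact (deleteEdges_adj.mp hvc).1
  · rintro rfl
    exact (deleteEdges_adj.mp hvc).2 (Sym2.eq_swap ▸ rfl)
  · exact mem_branch.mpr (hcw.mono (deleteEdges_mono (deleteEdges_le _)))

lemma IsAcyclic.not_mem_biUnion_branch (hG : G.IsAcyclic) :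
    v ∉ (G.children u v).biUnion (G.branch v) := by
  simp only [Finset.mem_biUnion, not_exists, not_and]
  exact fun c hc => hG.not_mem_branch (mem_children.mp hc).1

lemma IsAcyclic.sum_branch {M : Type*} [AddCommMonoid M] (hG : G.IsAcyclic) (f : V → M) :
    ∑ x ∈ G.branch u v, f x = f v + ∑ c ∈ G.children u v, ∑ x ∈ G.branch v c, f x := by
  rw [hG.branch_eq, Finset.sum_insert hG.not_mem_biUnion_branch,
    Finset.sum_biUnion hG.pairwiseDisjoint_branch]

end SimpleGraph

namespace ForestRouting

open SimpleGraph

variable {V ι : Type*} {F : SimpleGraph V} (P : ι → Σ u v : V, F.Walk u v)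

def IsSaturated (s : Finset ι) (K : Finset V) : Prop :=
  ∀ i ∈ s, ∀ x ∈ (P i).2.2.support, x ∈ K ↔ (P i).1 ∈ K

variable {P} {s : Finset ι} {K : Finset V}

lemma IsSaturated.exists_mem_iff (hK : IsSaturated P s K) {i : ι} (hi : i ∈ s) {e : Sym2 V}
    (he : e ∈ (P i).2.2.edges) : (∃ w ∈ e, w ∈ K) ↔ (P i).1 ∈ K := by
  refine ⟨fun ⟨w, hw, hwK⟩ => (hK i hi w (Walk.mem_support_of_mem_edges he hw)).mp hwK,
    fun h => ?_⟩
  induction e using Sym2.ind with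
  | h a b =>
    exact ⟨a, Sym2.mem_mk_left a b, (hK i hi a (Walk.fst_mem_support_of_mem_edges _ he)).mpr h⟩

variable (P) [DecidableEq V]

def edgeFinset (s : Finset ι) : Finset (Sym2 V) :=
  s.biUnion fun i => (P i).2.2.edges.toFinset

def load (s : Finset ι) (e : Sym2 V) : ℕ :=
  #{i ∈ s | e ∈ (P i).2.2.edges}

def graph (s : Finset ι) : SimpleGraph V :=
  fromEdgeSet (edgeFinset P s)

def endDegree (s : Finset ι) (x : V) : ℕ :=
  #{i ∈ s | (P i).1 = x} + #{i ∈ s | (P i).2.1 = x}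

def IsIrreducible (s : Finset ι) : Prop :=
  ∀ e ∈ edgeFinset P s, ∀ e' ∈ edgeFinset P s, e ≠ e' →
    ∃ i ∈ s, e ∈ (P i).2.2.edges ∧ e' ∉ (P i).2.2.edges

variable {P}

lemma mem_edgeFinset {e : Sym2 V} :
    e ∈ edgeFinset P s ↔ ∃ i ∈ s, e ∈ (P i).2.2.edges := by
  simp [edgeFinset]

lemma mem_edgeSet_of_mem_edgeFinset {e : Sym2 V} (he : e ∈ edgeFinset P s) : e ∈ F.edgeSet := by
  obtain ⟨i, -, hi⟩ := mem_edgeFinset.mp he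
  exact (P i).2.2.edges_subset_edgeSet hi

lemma graph_adj {u v : V} : (graph P s).Adj u v ↔ s(u, v) ∈ edgeFinset P s := by
  exact (fromEdgeSet_adj _).trans
    ⟨And.left, fun h => ⟨h, (mem_edgeSet_of_mem_edgeFinset h).ne⟩⟩

lemma graph_le : graph P s ≤ F := fun _ _ h => mem_edgeSet_of_mem_edgeFinset (graph_adj.mp h)

lemma reachable_of_mem_support {i : ι} (hi : i ∈ s) {x : V} (hx : x ∈ (P i).2.2.support) :
    (graph P s).Reachable (P i).1 x := by
  have hE : ∀ e ∈ (P i).2.2.edges, e ∈ (graph P s).edgeSet := fun e he => by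
    induction e using Sym2.ind with
    | h a b => exact graph_adj.mpr (mem_edgeFinset.mpr ⟨i, hi, he⟩)
  exact ((P i).2.2.transfer _ hE).reachable_of_mem_support (by rwa [Walk.support_transfer])

lemma load_pos {e : Sym2 V} (he : e ∈ edgeFinset P s) : 0 < load P s e := by
  obtain ⟨i, hi, he⟩ := mem_edgeFinset.mp he
  exact Finset.card_pos.mpr ⟨i, Finset.mem_filter.mpr ⟨hi, he⟩⟩

lemma sum_length_eq_sum_load (hP : ∀ i ∈ s, (P i).2.2.IsTrail) :
    ∑ i ∈ s, (P i).2.2.length = ∑ e ∈ edgeFinset P s, load P s e := by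
  have hlen : ∀ i ∈ s, (P i).2.2.length = #{e ∈ edgeFinset P s | e ∈ (P i).2.2.edges} := by
    intro i hi
    rw [← Walk.length_edges, ← List.toFinset_card_of_nodup (hP i hi).edges_nodup]
    congr 1
    ext e
    simpa using fun he => mem_edgeFinset.mpr ⟨i, hi, he⟩
  rw [Finset.sum_congr rfl hlen]
  exact Finset.sum_card_bipartiteAbove_eq_sum_card_bipartiteBelow _

lemma IsSaturated.mem_edgeFinset_filter (hK : IsSaturated P s K) {e : Sym2 V} :
    e ∈ edgeFinset P {i ∈ s | (P i).1 ∉ K} ↔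
      e ∈ edgeFinset P s ∧ ¬∃ w ∈ e, w ∈ K := by
  simp only [mem_edgeFinset, Finset.mem_filter]
  constructor
  · rintro ⟨i, ⟨hi, hiK⟩, he⟩
    exact ⟨⟨i, hi, he⟩, fun hw => hiK ((hK.exists_mem_iff hi he).mp hw)⟩
  · rintro ⟨⟨i, hi, he⟩, hw⟩
    exact ⟨i, ⟨hi, fun hiK => hw ((hK.exists_mem_iff hi he).mpr hiK)⟩, he⟩

lemma IsSaturated.edgeFinset_filter_subset (hK : IsSaturated P s K) :
    edgeFinset P {i ∈ s | (P i).1 ∉ K} ⊆ edgeFinset P s :=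
  fun _ he => (hK.mem_edgeFinset_filter.mp he).1

lemma IsSaturated.isIrreducible_filter (hK : IsSaturated P s K) (hirr : IsIrreducible P s) :
    IsIrreducible P {i ∈ s | (P i).1 ∉ K} := by
  intro e he e' he' hne
  obtain ⟨heE, heK⟩ := hK.mem_edgeFinset_filter.mp he
  obtain ⟨i, hi, hie, hie'⟩ := hirr e heE e' (hK.mem_edgeFinset_filter.mp he').1 hne
  exact ⟨i, Finset.mem_filter.mpr ⟨hi, fun hiK => heK ((hK.exists_mem_iff hi hie).mpr hiK)⟩,
    hie, hie'⟩

lemma IsSaturated.sum_endDegree (hK : IsSaturated P s K) :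
    ∑ x ∈ K, endDegree P s x = 2 * #{i ∈ s | (P i).1 ∈ K} := by
  have hend : {i ∈ s | (P i).2.1 ∈ K} = {i ∈ s | (P i).1 ∈ K} :=
    Finset.filter_congr fun i hi => hK i hi _ (P i).2.2.end_mem_support
  simp only [endDegree, Finset.sum_add_distrib, Finset.sum_card_fiberwise_eq_card_filter, hend]
  ring

variable [Fintype V]

variable (P) in
open scoped Classical in
noncomputable def branchEdges (s : Finset ι) (u v : V) : Finset (Sym2 V) :=
  {e ∈ edgeFinset P s | e ≠ s(u, v) ∧ ∃ w ∈ e, w ∈ (graph P s).branch u v}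

lemma mem_branchEdges {u v : V} {e : Sym2 V} :
    e ∈ branchEdges P s u v ↔
      e ∈ edgeFinset P s ∧ e ≠ s(u, v) ∧ ∃ w ∈ e, w ∈ (graph P s).branch u v := by
  unfold branchEdges; exact Finset.mem_filter

lemma load_le_endDegree_add_sum (hP : ∀ i ∈ s, (P i).2.2.IsTrail) {u v : V} :
    load P s s(u, v) ≤ endDegree P s v + ∑ c ∈ (graph P s).children u v,
      #{i ∈ s | s(u, v) ∈ (P i).2.2.edges ∧ s(v, c) ∈ (P i).2.2.edges} := by
  classical
  calc load P s s(u, v)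
      ≤ #({i ∈ s | (P i).1 = v} ∪ {i ∈ s | (P i).2.1 = v} ∪
          ((graph P s).children u v).biUnion fun c =>
            {i ∈ s | s(u, v) ∈ (P i).2.2.edges ∧ s(v, c) ∈ (P i).2.2.edges}) := by
        refine Finset.card_le_card fun i hi => ?_
        obtain ⟨his, he⟩ := Finset.mem_filter.mp hi
        simp only [Finset.mem_union, Finset.mem_filter, Finset.mem_biUnion]
        by_cases ha : (P i).1 = v
        · exact .inl (.inl ⟨his, ha⟩)
        by_cases hb : (P i).2.1 = v
        · exact .inl (.inr ⟨his, hb⟩)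
        obtain ⟨c, hcu, hc⟩ := (hP i his).exists_ne_mem_edges he (Ne.symm ha) (Ne.symm hb)
        have hvc := graph_adj.mpr (mem_edgeFinset.mpr ⟨i, his, hc⟩)
        exact .inr ⟨c, mem_children.mpr ⟨hvc, hcu⟩, his, he, hc⟩
    _ ≤ endDegree P s v + ∑ c ∈ (graph P s).children u v,
          #{i ∈ s | s(u, v) ∈ (P i).2.2.edges ∧ s(v, c) ∈ (P i).2.2.edges} :=
        (Finset.card_union_le _ _).trans
          (add_le_add (Finset.card_union_le _ _) Finset.card_biUnion_le)

lemma card_filter_lt_load (hirr : IsIrreducible P s) {u v c : V}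
    (huv : (graph P s).Adj u v) (hc : c ∈ (graph P s).children u v) :
    #{i ∈ s | s(u, v) ∈ (P i).2.2.edges ∧ s(v, c) ∈ (P i).2.2.edges} <
      load P s s(v, c) := by
  obtain ⟨hvc, hcu⟩ := mem_children.mp hc
  obtain ⟨j, hj, hjvc, hjuv⟩ :=
    hirr _ (graph_adj.mp hvc) _ (graph_adj.mp huv) (hvc.sym2_mk_ne hcu)
  refine Finset.card_lt_card ((Finset.ssubset_iff_of_subset ?_).mpr ⟨j, ?_, ?_⟩)
  · exact Finset.monotone_filter_right s fun _ _ h => h.2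
  · exact Finset.mem_filter.mpr ⟨hj, hjvc⟩
  · simp [hjuv]

lemma load_add_card_children_le (hP : ∀ i ∈ s, (P i).2.2.IsTrail)
    (hirr : IsIrreducible P s) {u v : V} (huv : (graph P s).Adj u v) :
    load P s s(u, v) + #((graph P s).children u v) ≤
      endDegree P s v + ∑ c ∈ (graph P s).children u v, load P s s(v, c) := by
  have hsum := Finset.sum_le_sum fun c hc =>
    Nat.lt_iff_add_one_le.mp (card_filter_lt_load hirr huv hc)
  rw [Finset.sum_add_distrib, ← Finset.card_eq_sum_ones] at hsum
  have := load_le_endDegree_add_sum hP (u := u) (v := v)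
  omega

lemma card_branchEdges_le (hF : F.IsAcyclic) {u v : V} :
    #(branchEdges P s u v) ≤
      ∑ c ∈ (graph P s).children u v, (#(branchEdges P s v c) + 1) := by
  calc #(branchEdges P s u v)
      ≤ #(((graph P s).children u v).biUnion fun c => insert s(v, c) (branchEdges P s v c)) := by
        refine Finset.card_le_card fun e he => ?_
        obtain ⟨heE, hne, w, hwe, hw⟩ := mem_branchEdges.mp he
        rw [(hF.anti graph_le).branch_eq, Finset.mem_insert, Finset.mem_biUnion] at hw
        rw [Finset.mem_biUnion]
        rcases hw with rfl | ⟨c, hc, hwc⟩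
        · obtain ⟨z, rfl⟩ := Sym2.mem_iff_exists.mp hwe
          refine ⟨z, mem_children.mpr ⟨graph_adj.mpr heE, ?_⟩, Finset.mem_insert_self _ _⟩
          rintro rfl
          exact hne Sym2.eq_swap
        · refine ⟨c, hc, Finset.mem_insert.mpr (or_iff_not_imp_left.mpr fun hec => ?_)⟩
          exact mem_branchEdges.mpr ⟨heE, hec, w, hwe, hwc⟩
    _ ≤ ∑ c ∈ (graph P s).children u v, #(insert s(v, c) (branchEdges P s v c)) :=
        Finset.card_biUnion_le
    _ ≤ ∑ c ∈ (graph P s).children u v, (#(branchEdges P s v c) + 1) :=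
        Finset.sum_le_sum fun _ _ => Finset.card_insert_le _ _

theorem card_branchEdges_add_load_le (hF : F.IsAcyclic)
    (hP : ∀ i ∈ s, (P i).2.2.IsTrail) (hirr : IsIrreducible P s) {u v : V}
    (huv : (graph P s).Adj u v) :
    #(branchEdges P s u v) + load P s s(u, v) ≤
      ∑ x ∈ (graph P s).branch u v, endDegree P s x := by
  have hG : (graph P s).IsAcyclic := hF.anti graph_le
  induction hn : #((graph P s).branch u v) using Nat.strong_induction_on generalizing u v with
  | _ n ih =>
  subst hn
  have hchild : ∀ c ∈ (graph P s).children u v, #(branchEdges P s v c) + load P s s(v, c) ≤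
      ∑ x ∈ (graph P s).branch v c, endDegree P s x := fun c hc =>
    ih _ (Finset.card_lt_card ⟨hG.branch_subset_branch hc,
      fun h => hG.not_mem_branch (mem_children.mp hc).1 (h self_mem_branch)⟩)
      (mem_children.mp hc).1 rfl
  have h1 := card_branchEdges_le (P := P) (s := s) hF (u := u) (v := v)
  have h2 := load_add_card_children_le hP hirr huv
  have h3 := Finset.sum_le_sum hchild
  rw [Finset.sum_add_distrib, ← Finset.card_eq_sum_ones] at h1
  rw [Finset.sum_add_distrib] at h3
  rw [hG.sum_branch]
  omega

lemma isSaturated_branch_union {u v : V} (huv : (graph P s).Adj u v) :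
    IsSaturated P s ((graph P s).branch u v ∪ (graph P s).branch v u) := fun i hi x hx => by
  rw [mem_branch_union_branch huv, mem_branch_union_branch huv]
  have := reachable_of_mem_support hi hx
  exact ⟨fun h => h.trans this.symm, fun h => h.trans this⟩

lemma card_sdiff_edgeFinset_filter_add_one_le (hF : F.IsAcyclic)
    (hP : ∀ i ∈ s, (P i).2.2.IsTrail) (hirr : IsIrreducible P s) {u v : V}
    (huv : (graph P s).Adj u v) :
    #(edgeFinset P s \ edgeFinset P
        {i ∈ s | (P i).1 ∉ (graph P s).branch u v ∪ (graph P s).branch v u}) + 1 ≤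
      ∑ x ∈ (graph P s).branch u v ∪ (graph P s).branch v u, endDegree P s x := by
  have hsub : edgeFinset P s \ edgeFinset P
        {i ∈ s | (P i).1 ∉ (graph P s).branch u v ∪ (graph P s).branch v u}
      ⊆ insert s(u, v) (branchEdges P s u v ∪ branchEdges P s v u) := by
    intro e he
    rw [Finset.mem_sdiff, (isSaturated_branch_union huv).mem_edgeFinset_filter, not_and,
      not_not] at he
    obtain ⟨w, hwe, hw⟩ := he.2 he.1
    rw [Finset.mem_insert, Finset.mem_union, mem_branchEdges, mem_branchEdges,
      Sym2.eq_swap (a := v)]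
    by_cases hne : e = s(u, v)
    · exact .inl hne
    rcases Finset.mem_union.mp hw with hw | hw
    exacts [.inr (.inl ⟨he.1, hne, w, hwe, hw⟩), .inr (.inr ⟨he.1, hne, w, hwe, hw⟩)]
  have h1 := (Finset.card_le_card hsub).trans ((Finset.card_insert_le _ _).trans
    (Nat.add_le_add_right (Finset.card_union_le _ _) 1))
  have h2 := card_branchEdges_add_load_le hF hP hirr huv
  have h3 := card_branchEdges_add_load_le hF hP hirr huv.symm
  have h4 := load_pos (graph_adj.mp huv)
  rw [Finset.sum_union ((hF.anti graph_le).disjoint_branch huv)]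
  rw [Sym2.eq_swap] at h3
  omega

theorem card_edgeFinset_le (hF : F.IsAcyclic) (s : Finset ι) (hP : ∀ i ∈ s, (P i).2.2.IsTrail)
    (hirr : IsIrreducible P s) : #(edgeFinset P s) ≤ 2 * #s := by
  induction s using Finset.strongInduction with
  | H s ih =>
  obtain hE | ⟨e, he⟩ := (edgeFinset P s).eq_empty_or_nonempty
  · simp [hE]
  induction e using Sym2.ind with
  | h u v =>
  have huv := graph_adj.mpr he
  have hK := isSaturated_branch_union huv
  have hssub : {i ∈ s | (P i).1 ∉ (graph P s).branch u v ∪ (graph P s).branch v u} ⊂ s := by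
    obtain ⟨i, hi, hie⟩ := mem_edgeFinset.mp he
    refine Finset.filter_ssubset.mpr ⟨i, hi, not_not.mpr ((hK.exists_mem_iff hi hie).mp ?_)⟩
    exact ⟨v, Sym2.mem_mk_right u v, Finset.mem_union_left _ self_mem_branch⟩
  have hrest := ih _ hssub (fun i hi => hP i (Finset.mem_filter.mp hi).1)
    (hK.isIrreducible_filter hirr)
  have hcomp := card_sdiff_edgeFinset_filter_add_one_le hF hP hirr huv
  rw [hK.sum_endDegree] at hcomp
  have hE := Finset.card_sdiff_add_card_eq_card hK.edgeFinset_filter_subset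
  have hs := Finset.card_filter_add_card_filter_not (s := s)
    fun i => (P i).1 ∈ (graph P s).branch u v ∪ (graph P s).branch v u
  omega

end ForestRouting

theorem forest_irreducible_routing_avg_length_general
    {V : Type*} [Fintype V] [DecidableEq V]
    (F : SimpleGraph V) (hF : F.IsAcyclic)
    {ι : Type*} [Fintype ι]
    (P : ι → Σ u v : V, F.Walk u v)
    (hpath : ∀ i, (P i).2.2.IsPath)
    (c : ℕ)
    (hcong : ∀ e : Sym2 V,
      (Finset.univ.filter fun i => e ∈ (P i).2.2.edges).card ≤ c)
    (hirr : ∀ e ∈ F.edgeSet, ∀ e' ∈ F.edgeSet, e ≠ e' →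
      ¬ (∀ i, e ∈ (P i).2.2.edges → e' ∈ (P i).2.2.edges)) :
    ∑ i, (P i).2.2.length ≤ 2 * c * Fintype.card ι := by
  have hP : ∀ i ∈ Finset.univ, (P i).2.2.IsTrail := fun i _ => (hpath i).isTrail
  have hirr' : ForestRouting.IsIrreducible P Finset.univ := fun e he e' he' hne => by
    simpa using hirr e (ForestRouting.mem_edgeSet_of_mem_edgeFinset he)
      e' (ForestRouting.mem_edgeSet_of_mem_edgeFinset he') hne
  calc ∑ i, (P i).2.2.length
      = ∑ e ∈ ForestRouting.edgeFinset P Finset.univ, ForestRouting.load P Finset.univ e :=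
        ForestRouting.sum_length_eq_sum_load hP
    _ ≤ #(ForestRouting.edgeFinset P Finset.univ) * c :=
        Finset.sum_le_card_nsmul _ _ _ fun e _ => hcong e
    _ ≤ 2 * Fintype.card ι * c :=
        Nat.mul_le_mul_right _ (ForestRouting.card_edgeFinset_le hF Finset.univ hP hirr')
    _ = 2 * c * Fintype.card ι := by ring

/-- In a forest `F`, for any non-empty irreducible routing `S` with
congestion `c`, the sum of the lengths of the paths is at most `2 * c * |S|`
(i.e. the average path length is at most `2c`). -/
theorem forest_irreducible_routing_avg_length
    {V : Type*} [Fintype V] [DecidableEq V]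
    (F : SimpleGraph V) (hF : F.IsAcyclic)
    {ι : Type*} [Fintype ι] [Nonempty ι]
    (P : ι → Σ u v : V, F.Walk u v)
    (hpath : ∀ i, (P i).2.2.IsPath)
    (c : ℕ)
    (hcong : ∀ e : Sym2 V,
      (Finset.univ.filter fun i => e ∈ (P i).2.2.edges).card ≤ c)
    (hirr : ∀ e ∈ F.edgeSet, ∀ e' ∈ F.edgeSet, e ≠ e' →
      ¬ (∀ i, e ∈ (P i).2.2.edges → e' ∈ (P i).2.2.edges)) :
    ∑ i, (P i).2.2.length ≤ 2 * c * Fintype.card ι :=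
  forest_irreducible_routing_avg_length_general F hF P hpath c hcong hirr
end

section
/- Let c ≥ 1 be an integer and consider the graph G obtained from a path of length c−1 by attaching a star with c−1 leaves to one of its endpoints. The family consisting of the c−1 paths of length c (each from a leaf of the star through the star center along the whole original path) together with the 2c−2 paths of length 1 given by taking each edge of G twice is an irreducible routing of G with congestion c, and its average path length equals (c+2)/3. -/
open SimpleGraph Sum

/-- The graph obtained from a path on vertices `inl 0, …, inl (c-1)` (length `c-1`)
by attaching a star with `c-1` leaves (the vertices `inr j`) to the endpoint `inl 0`. -/
def spGraph (c : ℕ) : SimpleGraph (Fin c ⊕ Fin (c - 1)) :=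
  SimpleGraph.fromEdgeSet
    ({e | ∃ (i j : Fin c), (i : ℕ) + 1 = (j : ℕ) ∧ e = s(inl i, inl j)} ∪
     {e | ∃ (h : 0 < c) (j : Fin (c - 1)), e = s(inl ⟨0, h⟩, inr j)})

lemma spGraph_adj_path (c : ℕ) (i j : Fin c) (hij : (i : ℕ) + 1 = (j : ℕ)) :
    (spGraph c).Adj (inl i) (inl j) := by
  rw [spGraph, SimpleGraph.fromEdgeSet_adj]
  refine ⟨Or.inl ⟨i, j, hij, rfl⟩, ?_⟩
  intro h
  have : i = j := Sum.inl.inj h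
  subst this
  omega

lemma spGraph_adj_star (c : ℕ) (h : 0 < c) (j : Fin (c - 1)) :
    (spGraph c).Adj (inl ⟨0, h⟩) (inr j) := by
  rw [spGraph, SimpleGraph.fromEdgeSet_adj]
  exact ⟨Or.inr ⟨h, j, rfl⟩, by simp⟩

/-- The "spine": the walk from `inl 0` to `inl n` along the original path. -/
def spSpine (c : ℕ) (hc : 0 < c) : (n : ℕ) → (h : n < c) →
    (spGraph c).Walk (inl ⟨0, hc⟩) (inl ⟨n, h⟩)
  | 0, _ => SimpleGraph.Walk.nil
  | n + 1, h =>
    (spSpine c hc n (Nat.lt_of_succ_lt h)).concat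
      (spGraph_adj_path c ⟨n, Nat.lt_of_succ_lt h⟩ ⟨n + 1, h⟩ rfl)

/-- The family consisting of the `c-1` long paths (each from a star leaf through the
star center along the whole original path, of length `c`), indexed by `inl j`, together
with the `2c-2` paths of length 1, one for each edge of the graph: `inr (inl i)` is the
`i`-th path edge and `inr (inr j)` is the `j`-th star edge. -/
def spFamily (c : ℕ) (hc : 0 < c) :
    (Fin (c - 1) ⊕ Fin (c - 1) ⊕ Fin (c - 1)) →
      Σ (u v : Fin c ⊕ Fin (c - 1)), (spGraph c).Walk u v
  | inl j =>
      ⟨inr j, inl ⟨c - 1, Nat.sub_lt hc one_pos⟩,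
        SimpleGraph.Walk.cons ((spGraph_adj_star c hc j).symm)
          (spSpine c hc (c - 1) (Nat.sub_lt hc one_pos))⟩
  | inr (inl i) =>
      ⟨inl ⟨(i : ℕ), by have := i.2; omega⟩, inl ⟨(i : ℕ) + 1, by have := i.2; omega⟩,
        SimpleGraph.Walk.cons (spGraph_adj_path c _ _ rfl) SimpleGraph.Walk.nil⟩
  | inr (inr j) =>
      ⟨inl ⟨0, hc⟩, inr j,
        SimpleGraph.Walk.cons (spGraph_adj_star c hc j) SimpleGraph.Walk.nil⟩

/-!
Every edge of the graph is the unique edge of exactly one of the length-1 paths. Such a path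
separates its edge from every other edge, so no edge is redundant; and an edge then lies on at
most the `c - 1` long paths plus one short one. The `3(c - 1)` paths have total length
`(c - 1) c + 2 (c - 1) = (c - 1)(c + 2)`.
-/

open Finset

theorem Finset.card_filter_univ_sum {α β : Type*} [Fintype α] [Fintype β]
    (p : α ⊕ β → Prop) [DecidablePred p] :
    (univ.filter p).card = (univ.filter (p ∘ inl)).card + (univ.filter (p ∘ inr)).card := by
  simp only [card_filter, Fintype.sum_sum_type, Function.comp_apply]

section

variable {c : ℕ} (hc : 0 < c)

lemma spSpine_length (n : ℕ) (h : n < c) : (spSpine c hc n h).length = n := by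
  induction n with
  | zero => rfl
  | succ n ih => simp [spSpine, ih]

lemma exists_le_eq_inl_of_mem_support_spSpine {n : ℕ} {h : n < c} {x : Fin c ⊕ Fin (c - 1)}
    (hx : x ∈ (spSpine c hc n h).support) : ∃ k : Fin c, (k : ℕ) ≤ n ∧ x = inl k := by
  induction n with
  | zero => exact ⟨_, le_rfl, by simpa [spSpine] using hx⟩
  | succ n ih =>
    simp only [spSpine, Walk.support_concat, List.mem_append, List.mem_singleton] at hx
    rcases hx with hx | rfl
    · obtain ⟨k, hk, rfl⟩ := ih hx
      exact ⟨k, by omega, rfl⟩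
    · exact ⟨_, le_rfl, rfl⟩

lemma spSpine_isPath (n : ℕ) (h : n < c) : (spSpine c hc n h).IsPath := by
  induction n with
  | zero => exact Walk.IsPath.nil
  | succ n ih =>
    refine (ih _).concat (fun hmem => ?_) _
    obtain ⟨k, hk, hkn⟩ := exists_le_eq_inl_of_mem_support_spSpine hc hmem
    have : n + 1 = k := congrArg Fin.val (inl_injective hkn)
    omega

lemma spFamily_isPath (i : Fin (c - 1) ⊕ Fin (c - 1) ⊕ Fin (c - 1)) :
    (spFamily c hc i).2.2.IsPath := by
  rcases i with j | i | j
  · refine (spSpine_isPath hc _ _).cons fun hmem => ?_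
    obtain ⟨k, -, hk⟩ := exists_le_eq_inl_of_mem_support_spSpine hc hmem
    exact inr_ne_inl hk
  · exact (spGraph_adj_path c _ _ rfl).isPath_toWalk
  · exact (spGraph_adj_star c hc j).isPath_toWalk

lemma spFamily_length_inl (j : Fin (c - 1)) : (spFamily c hc (inl j)).2.2.length = c := by
  simp [spFamily, spSpine_length]
  omega

lemma spFamily_length_inr (i : Fin (c - 1) ⊕ Fin (c - 1)) :
    (spFamily c hc (inr i)).2.2.length = 1 := by
  rcases i with i | i <;> rfl

lemma sum_spFamily_length : ∑ i, (spFamily c hc i).2.2.length = (c - 1) * (c + 2) := by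
  simp only [Fintype.sum_sum_type, spFamily_length_inl, spFamily_length_inr, sum_const,
    card_univ, Fintype.card_sum, Fintype.card_fin, smul_eq_mul]
  ring

lemma eq_of_mem_edges_spFamily_inr {e : Sym2 (Fin c ⊕ Fin (c - 1))}
    {a b : Fin (c - 1) ⊕ Fin (c - 1)} (ha : e ∈ (spFamily c hc (inr a)).2.2.edges)
    (hb : e ∈ (spFamily c hc (inr b)).2.2.edges) : a = b := by
  rcases a with a | a <;> rcases b with b | b <;> simp [spFamily] at ha hb <;> subst ha <;>
    simp [Fin.ext_iff] at hb ⊢ <;> omega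

lemma card_filter_mem_edges_spFamily_le (e : Sym2 (Fin c ⊕ Fin (c - 1))) :
    (univ.filter fun i => e ∈ (spFamily c hc i).2.2.edges).card ≤ c := by
  rw [card_filter_univ_sum]
  have hlong := card_filter_le (univ : Finset (Fin (c - 1)))
    fun j => e ∈ (spFamily c hc (inl j)).2.2.edges
  have hshort : (univ.filter fun i => e ∈ (spFamily c hc (inr i)).2.2.edges).card ≤ 1 :=
    card_le_one.2 fun a ha b hb =>
      eq_of_mem_edges_spFamily_inr hc (mem_filter.1 ha).2 (mem_filter.1 hb).2
  simp only [card_univ, Fintype.card_fin] at hlong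
  simp only [Function.comp_def]
  omega

lemma exists_spFamily_edges_eq_singleton {e : Sym2 (Fin c ⊕ Fin (c - 1))}
    (he : e ∈ (spGraph c).edgeSet) : ∃ i, (spFamily c hc i).2.2.edges = [e] := by
  rw [spGraph, edgeSet_fromEdgeSet] at he
  rcases he.1 with ⟨i, j, hij, rfl⟩ | ⟨-, j, rfl⟩
  · refine ⟨inr (inl ⟨i, by omega⟩), ?_⟩
    simp [spFamily, hij]
  · exact ⟨inr (inr j), rfl⟩

end

/-- the above family is an irreducible routing of `spGraph c` with
congestion `c`, and its average path length equals `(c+2)/3` (stated multiplicatively: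
`3 · (sum of lengths) = (c+2) · |S|`). -/
theorem spFamily_irreducible_congestion_avg (c : ℕ) (hc : 1 ≤ c) :
    (∀ i, ((spFamily c hc i).2.2).IsPath) ∧
    (∀ e : Sym2 (Fin c ⊕ Fin (c - 1)),
      (Finset.univ.filter fun i => e ∈ ((spFamily c hc i).2.2).edges).card ≤ c) ∧
    (∀ e ∈ (spGraph c).edgeSet, ∀ e' ∈ (spGraph c).edgeSet, e ≠ e' →
      ¬ (∀ i, e ∈ ((spFamily c hc i).2.2).edges → e' ∈ ((spFamily c hc i).2.2).edges)) ∧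
    3 * (∑ i, ((spFamily c hc i).2.2).length) =
      (c + 2) * Fintype.card (Fin (c - 1) ⊕ Fin (c - 1) ⊕ Fin (c - 1)) := by
  refine ⟨spFamily_isPath hc, card_filter_mem_edges_spFamily_le hc, ?_, ?_⟩
  · intro e he e' _ hne hred
    obtain ⟨i, hi⟩ := exists_spFamily_edges_eq_singleton hc he
    have := hred i (by simp [hi])
    simp only [hi, List.mem_singleton] at this
    exact hne this.symm
  · simp only [sum_spFamily_length, Fintype.card_sum, Fintype.card_fin]
    ring
end

section
/- Let G be a graph and S a family of paths in G in which an edge e is redundant, witnessed by an edge e' ≠ e such that every path of S containing e also contains e'. Let G' be obtained from G by contracting e, and let S' be the family obtained from S by contracting e in every path of S that contains e. Then a subfamily of S' is pairwise edge-disjoint in G' if and only if the corresponding subfamily of S is pairwise edge-disjoint in G. -/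
/-! Paths are modelled by their edge sets, and contracting `e` turns the edge set `P` of a path
into `P \ {e}`. Removing `e` can only destroy a common edge if that edge is `e` itself, and two
paths through `e` also share `e'`. -/

theorem Set.disjoint_diff_singleton_iff_of_mem_imp {E : Type*} {s t : Set E} {e e' : E}
    (hs : e ∈ s → e' ∈ s) (ht : e ∈ t → e' ∈ t) (hne : e' ≠ e) :
    Disjoint (s \ {e}) (t \ {e}) ↔ Disjoint s t := by
  refine ⟨fun h => Set.disjoint_left.2 fun x hxs hxt => ?_,
    fun h => h.mono Set.sdiff_subset Set.sdiff_subset⟩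
  by_cases hx : x = e
  · subst hx
    exact Set.disjoint_left.1 h ⟨hs hxs, hne⟩ ⟨ht hxt, hne⟩
  · exact Set.disjoint_left.1 h ⟨hxs, hx⟩ ⟨hxt, hx⟩

/-- Contraction of a redundant edge preserves edge-disjointness.
Paths are represented by their sets of edges (`Ped i ⊆ E`); contracting the edge `e`
turns the path with edge set `Ped i` into the path with edge set `Ped i \ {e}` (in the
contracted multigraph the remaining edges are kept, parallel edges staying distinct).
If `e` is redundant, witnessed by `e' ≠ e` such that every path containing `e` also
contains `e'`, then a subfamily `J` of the contracted paths is pairwise edge-disjoint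
if and only if the corresponding subfamily of original paths is pairwise edge-disjoint. -/
theorem contract_redundant_edge_preserves_edge_disjointness
    {E ι : Type*} (Ped : ι → Set E) (e e' : E) (hne : e' ≠ e)
    (hred : ∀ i, e ∈ Ped i → e' ∈ Ped i) (J : Set ι) :
    (J.Pairwise fun i j => Disjoint (Ped i \ {e}) (Ped j \ {e})) ↔
      (J.Pairwise fun i j => Disjoint (Ped i) (Ped j)) :=
  forall₅_congr fun i _ j _ _ =>
    Set.disjoint_diff_singleton_iff_of_mem_imp (hred i) (hred j) hne
end

section
/- Let H be a cubic graph and let G be the complete bipartite graph with one side {v1, v2, v3} and the other side V(H). Suppose H admits a proper 3-edge-coloring. Then there exists a family of pairwise edge-disjoint paths in G containing, for every edge {s,t} of H, a path from s to t. -/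
/-!
Route an edge `st` of `H` of color `c` along `s — v_c — t`. Two such paths share an edge
`{u, v_c}` only if their edges of `H` have the same color `c` and meet at `u`, which a proper
edge coloring forbids.
-/

/-- A family of paths in `G = K_{3,|V(H)|}` (with parts `V(H)` and `{v1,v2,v3}`)
routing all edges of `H`: for each edge `{s,t}` of `H` there is a path of the family
from `s` to `t`, and the paths are pairwise edge-disjoint. -/
def RoutesAllEdges {W : Type*} (H : SimpleGraph W)
    (P : H.edgeSet → Σ u v : W ⊕ Fin 3, (completeBipartiteGraph W (Fin 3)).Walk u v) : Prop :=
  (∀ e, (P e).2.2.IsPath) ∧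
  (∀ e : H.edgeSet, ∃ s t : W, (e : Sym2 W) = s(s, t) ∧
      (P e).1 = Sum.inl s ∧ (P e).2.1 = Sum.inl t) ∧
  (∀ e₁ e₂ : H.edgeSet, e₁ ≠ e₂ → ∀ x ∈ (P e₁).2.2.edges, x ∉ (P e₂).2.2.edges)

namespace SimpleGraph

variable {W C : Type*}

def hubWalk (c : C) (s t : W) : (completeBipartiteGraph W C).Walk (.inl s) (.inl t) :=
  .cons (v := .inr c) (by simp) (.cons (by simp) .nil)

theorem hubWalk_isPath {c : C} {s t : W} (h : s ≠ t) : (hubWalk c s t).IsPath := by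
  simp [hubWalk, Walk.isPath_def, h]

theorem mem_edges_hubWalk {c : C} {s t : W} {x : Sym2 (W ⊕ C)} :
    x ∈ (hubWalk c s t).edges ↔ ∃ u ∈ s(s, t), x = s(.inl u, .inr c) := by
  simp [hubWalk, Sym2.eq_swap (a := Sum.inr c)]

theorem exists_mem_of_mem_edges_hubWalk {c c' : C} {s t s' t' : W} {x : Sym2 (W ⊕ C)}
    (hx : x ∈ (hubWalk c s t).edges) (hx' : x ∈ (hubWalk c' s' t').edges) :
    c = c' ∧ ∃ u, u ∈ s(s, t) ∧ u ∈ s(s', t') := by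
  obtain ⟨u, hu, rfl⟩ := mem_edges_hubWalk.mp hx
  obtain ⟨u', hu', hx'⟩ := mem_edges_hubWalk.mp hx'
  simp only [Sym2.eq_iff, Sum.inl.injEq, Sum.inr.injEq, reduceCtorEq, and_false,
    or_false] at hx'
  exact ⟨hx'.2, u, hu, hx'.1 ▸ hu'⟩

end SimpleGraph

theorem edge_coloring_gives_routing_general
    {W : Type*} (H : SimpleGraph W)
    (hcol : ∃ φ : Sym2 W → Fin 3, ∀ e₁ ∈ H.edgeSet, ∀ e₂ ∈ H.edgeSet, e₁ ≠ e₂ →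
      (∃ v : W, v ∈ e₁ ∧ v ∈ e₂) → φ e₁ ≠ φ e₂) :
    ∃ P : H.edgeSet → Σ u v : W ⊕ Fin 3, (completeBipartiteGraph W (Fin 3)).Walk u v,
      RoutesAllEdges H P := by
  obtain ⟨φ, hφ⟩ := hcol
  have hout (e : Sym2 W) : s(e.out.1, e.out.2) = e := Quot.out_eq e
  refine ⟨fun e => ⟨_, _, SimpleGraph.hubWalk (φ e) (e : Sym2 W).out.1 (e : Sym2 W).out.2⟩,
    fun e => SimpleGraph.hubWalk_isPath ?_, fun e => ⟨_, _, (hout e).symm, rfl, rfl⟩, ?_⟩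
  · have he : s((e : Sym2 W).out.1, (e : Sym2 W).out.2) ∈ H.edgeSet := (hout e).symm ▸ e.2
    exact (H.mem_edgeSet.mp he).ne
  · intro e₁ e₂ hne x hx₁ hx₂
    obtain ⟨hc, u, hu₁, hu₂⟩ := SimpleGraph.exists_mem_of_mem_edges_hubWalk hx₁ hx₂
    rw [hout] at hu₁ hu₂
    exact hφ _ e₁.2 _ e₂.2 (Subtype.coe_ne_coe.mpr hne) ⟨u, hu₁, hu₂⟩ hc

/-- If the cubic graph `H` admits a proper 3-edge-coloring, then in the
complete bipartite graph with parts `{v1,v2,v3}` and `V(H)` there is a family of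
pairwise edge-disjoint paths containing, for every edge `{s,t}` of `H`, a path from
`s` to `t`. -/
theorem edge_coloring_gives_routing
    {W : Type*} [Fintype W] [DecidableEq W] (H : SimpleGraph W) [DecidableRel H.Adj]
    (hcubic : ∀ v : W, H.degree v = 3)
    (hcol : ∃ φ : Sym2 W → Fin 3, ∀ e₁ ∈ H.edgeSet, ∀ e₂ ∈ H.edgeSet, e₁ ≠ e₂ →
      (∃ v : W, v ∈ e₁ ∧ v ∈ e₂) → φ e₁ ≠ φ e₂) :
    ∃ P : H.edgeSet → Σ u v : W ⊕ Fin 3, (completeBipartiteGraph W (Fin 3)).Walk u v,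
      RoutesAllEdges H P :=
  edge_coloring_gives_routing_general H hcol
end

section
/- Let H be a cubic graph and let G be the complete bipartite graph with one side {v1, v2, v3} and the other side V(H). Suppose there exists a family of pairwise edge-disjoint paths in G containing, for every edge {s,t} of H, a path from s to t. Then every path in this family has length exactly 2 (i.e., is of the form s–v_c–t for some c ∈ {1,2,3}). -/
/-!
Every vertex `u` of `H` is an endpoint of three routed pairs. The path of each of them starts
or ends with an edge of `G` at `u`, and by disjointness these edges are distinct, so the three
paths use up all three edges of `G` at `u`. A path of length more than two visits some inner
vertex `u ∈ V(H)` through an edge of `G` at `u`; that edge then also lies on the path of an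
edge of `H` at `u`, which is a different path because `u` is not an endpoint of the first.
-/
open SimpleGraph

theorem exists_mem_of_pairwise_disjoint_of_card_le {ι β α : Type*} [Finite β]
    {L : ι → Set α} (hL : Pairwise (Function.onFun Disjoint L)) {g : β → α}
    (hmeet : ∀ i, ∃ b, g b ∈ L i) (hcard : Nat.card β ≤ Nat.card ι) (b : β) :
    ∃ i, g b ∈ L i := by
  choose f hf using hmeet
  have hinj : f.Injective := fun i j hij => by
    by_contra hne
    exact Set.disjoint_left.mp (hL hne) (hf i) (hij ▸ hf j)
  obtain ⟨i, rfl⟩ := (hinj.bijective_of_nat_card_le hcard).2 b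
  exact ⟨i, hf i⟩

namespace SimpleGraph
variable {V W : Type*}

theorem natCard_edgeSet_mem_eq_degree (G : SimpleGraph V) [Fintype V] [DecidableRel G.Adj]
    (v : V) : Nat.card {e : G.edgeSet // v ∈ (e : Sym2 V)} = G.degree v := by
  classical
  rw [Nat.card_congr (Equiv.subtypeSubtypeEquivSubtypeInter (· ∈ G.edgeSet) (v ∈ ·)),
    ← card_incidenceSet_eq_degree, ← Nat.card_eq_fintype_card]
  rfl

lemma completeBipartiteGraph_adj_inl_iff {s : V} {x : V ⊕ W} :
    (completeBipartiteGraph V W).Adj (.inl s) x ↔ ∃ c, x = .inr c := by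
  cases x <;> simp

namespace Walk

theorem exists_inr_mem_edges_of_not_nil {s : V} {x : V ⊕ W}
    {w : (completeBipartiteGraph V W).Walk (.inl s) x} (hw : ¬w.Nil) :
    ∃ c, s(.inl s, .inr c) ∈ w.edges := by
  obtain ⟨c, hc⟩ := completeBipartiteGraph_adj_inl_iff.mp (w.adj_snd hw)
  exact ⟨c, hc ▸ w.mk_start_snd_mem_edges hw⟩

theorem exists_inr_mem_edges_of_mem {a b u : V} (hab : a ≠ b) (hu : u ∈ s(a, b))
    (w : (completeBipartiteGraph V W).Walk (.inl a) (.inl b)) :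
    ∃ c, s(.inl u, .inr c) ∈ w.edges := by
  have hw : ¬w.Nil := fun h => hab (Sum.inl_injective h.eq)
  rcases Sym2.mem_iff.mp hu with rfl | rfl
  · exact exists_inr_mem_edges_of_not_nil hw
  · simpa using exists_inr_mem_edges_of_not_nil (w := w.reverse) (by simpa using hw)

theorem exists_inr_mem_edges_of_pairwise_disjoint {ι : Type*} [Finite W] {s t : ι → V}
    (Q : ∀ i, (completeBipartiteGraph V W).Walk (.inl (s i)) (.inl (t i)))
    (hst : ∀ i, s i ≠ t i) (hdisj : Pairwise fun i j => ∀ x ∈ (Q i).edges, x ∉ (Q j).edges)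
    {u : V} (hcard : Nat.card W ≤ Nat.card {i // u ∈ s(s i, t i)}) (c : W) :
    ∃ i, u ∈ s(s i, t i) ∧ s(.inl u, .inr c) ∈ (Q i).edges := by
  have hL : Pairwise (Function.onFun Disjoint
      fun i : {i // u ∈ s(s i, t i)} => {x | x ∈ (Q i).edges}) := fun i j hne =>
    Set.disjoint_left.mpr (hdisj fun h => hne (Subtype.ext h))
  obtain ⟨i, hi⟩ := exists_mem_of_pairwise_disjoint_of_card_le hL
    (fun i => exists_inr_mem_edges_of_mem (hst i) i.2 (Q i)) hcard c
  exact ⟨i, i.2, hi⟩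

theorem IsPath.length_eq_two_or_exists_inner_edge {s t : V}
    {w : (completeBipartiteGraph V W).Walk (.inl s) (.inl t)} (hw : w.IsPath) (hst : s ≠ t) :
    w.length = 2 ∨ ∃ u c, u ≠ s ∧ u ≠ t ∧ s(.inl u, .inr c) ∈ w.edges := by
  cases w with
  | nil => exact absurd rfl hst
  | cons h₁ q =>
    obtain ⟨c, rfl⟩ := completeBipartiteGraph_adj_inl_iff.mp h₁
    -- `q` runs from `inr c` to `inl t`, so it cannot be `nil`.
    cases q with
    | cons h₂ r =>
      rename_i y
      obtain ⟨u, rfl⟩ : ∃ u, y = .inl u := by cases y <;> simp at h₂ ⊢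
      cases r with
      | nil => simp
      | cons _ _ =>
        right
        have hsupp := hw.support_nodup
        simp only [support_cons, List.nodup_cons] at hsupp
        refine ⟨u, c, ?_, ?_, by simp [Sym2.eq_swap]⟩
        · rintro rfl; simp at hsupp
        · rintro rfl; exact hsupp.2.2.1 (by simp)

end Walk
end SimpleGraph

theorem routing_paths_have_length_two_general
    {W : Type*} [Fintype W] (H : SimpleGraph W) [DecidableRel H.Adj]
    (hcubic : ∀ v : W, H.degree v = 3)
    (P : H.edgeSet → Σ u v : W ⊕ Fin 3, (completeBipartiteGraph W (Fin 3)).Walk u v)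
    (hpath : ∀ e, (P e).2.2.IsPath)
    (hconn : ∀ e : H.edgeSet, ∃ s t : W, (e : Sym2 W) = s(s, t) ∧
      (P e).1 = Sum.inl s ∧ (P e).2.1 = Sum.inl t)
    (hdisj : ∀ e₁ e₂ : H.edgeSet, e₁ ≠ e₂ → ∀ x ∈ (P e₁).2.2.edges, x ∉ (P e₂).2.2.edges) :
    ∀ e : H.edgeSet, (P e).2.2.length = 2 := by
  choose s t he h₁ h₂ using hconn
  let Q e := (P e).2.2.copy (h₁ e) (h₂ e)
  have hst e : s e ≠ t e := (H.mem_edgeSet.mp (he e ▸ e.2)).ne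
  have hQdisj : Pairwise fun e₁ e₂ => ∀ x ∈ (Q e₁).edges, x ∉ (Q e₂).edges := fun e₁ e₂ hne => by
    simpa only [Q, Walk.edges_copy] using hdisj e₁ e₂ hne
  have hcover (u : W) (c : Fin 3) :
      ∃ e', u ∈ s(s e', t e') ∧ s(.inl u, .inr c) ∈ (Q e').edges := by
    refine Walk.exists_inr_mem_edges_of_pairwise_disjoint Q hst hQdisj ?_ c
    simp only [← he, Nat.card_fin, H.natCard_edgeSet_mem_eq_degree, hcubic, le_refl]
  intro e
  have hQpath : (Q e).IsPath := (Walk.isPath_copy ..).mpr (hpath e)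
  rcases hQpath.length_eq_two_or_exists_inner_edge (hst e) with h | ⟨u, c, hus, hut, hmem⟩
  · simpa [Q] using h
  · obtain ⟨e', hue', hce'⟩ := hcover u c
    have hne : e ≠ e' := by
      rintro rfl
      exact (Sym2.mem_iff.mp hue').elim hus hut
    exact (hQdisj hne _ hmem hce').elim

/-- If `H` is cubic and, in the complete bipartite graph `G` with parts
`{v1,v2,v3}` and `V(H)`, a family of pairwise edge-disjoint paths routes every edge
`{s,t}` of `H` (one `s`-`t` path per edge), then every path in the family has length
exactly 2. -/
theorem routing_paths_have_length_two
    {W : Type*} [Fintype W] [DecidableEq W] (H : SimpleGraph W) [DecidableRel H.Adj]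
    (hcubic : ∀ v : W, H.degree v = 3)
    (P : H.edgeSet → Σ u v : W ⊕ Fin 3, (completeBipartiteGraph W (Fin 3)).Walk u v)
    (hpath : ∀ e, (P e).2.2.IsPath)
    (hconn : ∀ e : H.edgeSet, ∃ s t : W, (e : Sym2 W) = s(s, t) ∧
      (P e).1 = Sum.inl s ∧ (P e).2.1 = Sum.inl t)
    (hdisj : ∀ e₁ e₂ : H.edgeSet, e₁ ≠ e₂ → ∀ x ∈ (P e₁).2.2.edges, x ∉ (P e₂).2.2.edges) :
    ∀ e : H.edgeSet, (P e).2.2.length = 2 :=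
  routing_paths_have_length_two_general H hcubic P hpath hconn hdisj
end

section
/- Let H be a cubic graph and let G be the complete bipartite graph with one side {v1, v2, v3} and the other side V(H). Then H admits a proper 3-edge-coloring if and only if there exists a family of pairwise edge-disjoint paths in G containing, for each edge {s,t} ∈ E(H), a path connecting s and t. -/
/-!
A proper edge colouring with colour set `α` routes each edge `st` of `H` along the path
`s — c — t` through its colour `c`; properness makes these paths edge-disjoint. Conversely,
`K_{V,α}` has `|V|·|α|` edges, which for an `|α|`-regular `H` is exactly `2|E(H)|`. Every route
joins two distinct vertices of `V`, so it has length at least `2`; disjointness therefore forces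
every route to have length exactly `2`, and its middle vertex is a proper colour of the edge.
-/

open SimpleGraph Sum Finset

namespace SimpleGraph

variable {V α : Type*}

lemma Walk.two_le_length_of_ne_of_not_adj {G : SimpleGraph V} {u v : V} (p : G.Walk u v)
    (hne : u ≠ v) (hnadj : ¬G.Adj u v) : 2 ≤ p.length := by
  by_contra! h
  interval_cases hp : p.length
  · exact hne (Walk.eq_of_length_eq_zero hp)
  · exact hnadj (Walk.adj_of_length_eq_one hp)

lemma sum_length_le_card_edgeFinset {ι : Type*} [Fintype ι] {G : SimpleGraph V}
    [Fintype G.edgeSet] (P : ι → Σ u v : V, G.Walk u v) (htrail : ∀ i, (P i).2.2.IsTrail)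
    (hdisj : Pairwise fun i j => (P i).2.2.edges.Disjoint (P j).2.2.edges) :
    ∑ i, (P i).2.2.length ≤ #G.edgeFinset := by
  classical
  calc ∑ i, (P i).2.2.length = ∑ i, #(P i).2.2.edges.toFinset := by
        simp [List.toFinset_card_of_nodup (htrail _).edges_nodup]
    _ = #(univ.biUnion fun i => (P i).2.2.edges.toFinset) :=
        (card_biUnion fun i _ j _ hij => List.disjoint_toFinset_iff_disjoint.mpr (hdisj hij)).symm
    _ ≤ #G.edgeFinset := card_le_card fun x hx => by
        obtain ⟨i, -, hx⟩ := mem_biUnion.mp hx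
        exact mem_edgeFinset.mpr ((P i).2.2.edges_subset_edgeSet (List.mem_toFinset.mp hx))

lemma IsRegularOfDegree.two_mul_card_edgeFinset [Fintype V] {G : SimpleGraph V} [DecidableRel G.Adj]
    {d : ℕ} (h : G.IsRegularOfDegree d) : 2 * #G.edgeFinset = Fintype.card V * d := by
  simp [← sum_degrees_eq_twice_card_edges, h.degree_eq]

lemma card_edgeFinset_completeBipartiteGraph [Fintype V] [Fintype α]
    [Fintype (completeBipartiteGraph V α).edgeSet] :
    #(completeBipartiteGraph V α).edgeFinset = Fintype.card V * Fintype.card α := by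
  have h := encard_edgeSet_completeBipartiteGraph (W₁ := V) (W₂ := α)
  rw [← coe_edgeFinset, Set.encard_coe_eq_coe_finsetCard] at h
  simp only [ENat.card_eq_coe_fintype_card] at h
  exact_mod_cast h

namespace completeBipartiteGraph

def walkVia (c : α) (s t : V) : (completeBipartiteGraph V α).Walk (inl s) (inl t) :=
  .cons (v := inr c) (by simp) (.cons (by simp) .nil)

lemma mem_edges_walkVia {c : α} {s t : V} {x : Sym2 (V ⊕ α)} :
    x ∈ (walkVia c s t).edges ↔ ∃ a ∈ s(s, t), x = s(inl a, inr c) := by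
  simp [walkVia, Sym2.eq_swap]

lemma isPath_walkVia {c : α} {s t : V} : (walkVia c s t).IsPath ↔ s ≠ t := by
  simp [walkVia, Walk.isPath_def]

lemma exists_eq_walkVia_of_length_eq_two {s t : V}
    (q : Σ u v : V ⊕ α, (completeBipartiteGraph V α).Walk u v) (hs : q.1 = inl s)
    (ht : q.2.1 = inl t) (hq : q.2.2.length = 2) : ∃ c, q = ⟨inl s, inl t, walkVia c s t⟩ := by
  obtain ⟨u, v, p⟩ := q
  dsimp only at hs ht hq
  subst hs ht
  match p, hq with
  | .cons (v := inr c) _ (.cons _ .nil), _ => exact ⟨c, rfl⟩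
  | .cons (v := inl _) h _, _ => simp at h

end completeBipartiteGraph

open completeBipartiteGraph

def IsEdgeDisjointRouting (H : SimpleGraph V)
    (P : H.edgeSet → Σ u v : V ⊕ α, (completeBipartiteGraph V α).Walk u v) : Prop :=
  (∀ e, (P e).2.2.IsPath) ∧
    (∀ e : H.edgeSet, ∃ s t : V, (e : Sym2 V) = s(s, t) ∧
      (P e).1 = inl s ∧ (P e).2.1 = inl t) ∧
    Pairwise fun e₁ e₂ => (P e₁).2.2.edges.Disjoint (P e₂).2.2.edges

lemma nonempty_lineGraph_coloring_iff [Nonempty α] {H : SimpleGraph V} :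
    Nonempty (H.lineGraph.Coloring α) ↔ ∃ φ : Sym2 V → α, ∀ e₁ ∈ H.edgeSet, ∀ e₂ ∈ H.edgeSet,
      e₁ ≠ e₂ → (∃ v : V, v ∈ e₁ ∧ v ∈ e₂) → φ e₁ ≠ φ e₂ := by
  classical
  constructor
  · rintro ⟨C⟩
    refine ⟨fun e => if h : e ∈ H.edgeSet then C ⟨e, h⟩ else Classical.arbitrary α,
      fun e₁ h₁ e₂ h₂ hne hv => ?_⟩
    simpa [h₁, h₂] using C.valid (lineGraph_adj_iff_exists.mpr ⟨by simpa using hne, hv⟩)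
  · rintro ⟨φ, hφ⟩
    refine ⟨Coloring.mk (fun e => φ e) fun {e₁ e₂} hadj => ?_⟩
    obtain ⟨hne, hv⟩ := lineGraph_adj_iff_exists.mp hadj
    exact hφ _ e₁.2 _ e₂.2 (Subtype.coe_injective.ne hne) hv

lemma exists_isEdgeDisjointRouting_of_coloring {H : SimpleGraph V} (C : H.lineGraph.Coloring α) :
    ∃ P, IsEdgeDisjointRouting (α := α) H P := by
  choose s t hst using fun e : H.edgeSet =>
    (Sym2.exists (f := fun z => (e : Sym2 V) = z)).mp ⟨_, rfl⟩
  refine ⟨fun e => ⟨_, _, walkVia (C e) (s e) (t e)⟩,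
    fun e => isPath_walkVia.mpr (H.ne_of_adj (H.mem_edgeSet.mp (hst e ▸ e.2))),
    fun e => ⟨_, _, hst e, rfl, rfl⟩, fun e₁ e₂ hne x hx₁ hx₂ => ?_⟩
  obtain ⟨a, ha, rfl⟩ := mem_edges_walkVia.mp hx₁
  obtain ⟨b, hb, hab⟩ := mem_edges_walkVia.mp hx₂
  obtain ⟨rfl, hC⟩ : a = b ∧ C e₁ = C e₂ := by simpa using hab
  exact C.valid (lineGraph_adj_iff_exists.mpr ⟨hne, a, hst e₁ ▸ ha, hst e₂ ▸ hb⟩) hC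

namespace IsEdgeDisjointRouting

variable [Fintype V] [Fintype α] {H : SimpleGraph V} [DecidableRel H.Adj]
  {P : H.edgeSet → Σ u v : V ⊕ α, (completeBipartiteGraph V α).Walk u v}

lemma length_eq_two (hH : H.IsRegularOfDegree (Fintype.card α)) (hP : IsEdgeDisjointRouting H P)
    (e : H.edgeSet) : (P e).2.2.length = 2 := by
  classical
  obtain ⟨hpath, hends, hdisj⟩ := hP
  have hge : ∀ e, 2 ≤ (P e).2.2.length := fun e => by
    obtain ⟨s, t, hst, hs, ht⟩ := hends e
    refine (P e).2.2.two_le_length_of_ne_of_not_adj ?_ ?_ <;> rw [ht, hs]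
    · exact inl_injective.ne (H.ne_of_adj (H.mem_edgeSet.mp (hst ▸ e.2)))
    · simp
  have hsum : ∑ e, (P e).2.2.length ≤ ∑ _e : H.edgeSet, 2 := calc
    ∑ e, (P e).2.2.length ≤ #(completeBipartiteGraph V α).edgeFinset :=
      sum_length_le_card_edgeFinset P (fun e => (hpath e).isTrail) hdisj
    _ = 2 * #H.edgeFinset := by
      rw [card_edgeFinset_completeBipartiteGraph, hH.two_mul_card_edgeFinset]
    _ = ∑ _e : H.edgeSet, 2 := by simp [edgeFinset_card, mul_comm]
  exact ((sum_eq_sum_iff_of_le fun e _ => hge e).mp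
    (le_antisymm (sum_le_sum fun e _ => hge e) hsum) e (mem_univ e)).symm

lemma nonempty_lineGraph_coloring (hH : H.IsRegularOfDegree (Fintype.card α))
    (hP : IsEdgeDisjointRouting H P) : Nonempty (H.lineGraph.Coloring α) := by
  have hlen := hP.length_eq_two hH
  obtain ⟨-, hends, hdisj⟩ := hP
  choose s t hst hs ht using hends
  choose c hc using fun e => exists_eq_walkVia_of_length_eq_two (P e) (hs e) (ht e) (hlen e)
  have hmem : ∀ e : H.edgeSet, ∀ v ∈ (e : Sym2 V), s(inl v, inr (c e)) ∈ (P e).2.2.edges :=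
    fun e v hv => by rw [hc e, mem_edges_walkVia]; exact ⟨v, hst e ▸ hv, rfl⟩
  refine ⟨Coloring.mk c fun {e₁ e₂} hadj hcc => ?_⟩
  obtain ⟨hne, v, hv₁, hv₂⟩ := lineGraph_adj_iff_exists.mp hadj
  exact hdisj hne (hmem e₁ v hv₁) (hcc ▸ hmem e₂ v hv₂)

end IsEdgeDisjointRouting

theorem nonempty_lineGraph_coloring_iff_exists_isEdgeDisjointRouting [Fintype V] [Fintype α]
    {H : SimpleGraph V} [DecidableRel H.Adj] (hH : H.IsRegularOfDegree (Fintype.card α)) :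
    Nonempty (H.lineGraph.Coloring α) ↔ ∃ P, IsEdgeDisjointRouting (α := α) H P :=
  ⟨fun ⟨C⟩ => exists_isEdgeDisjointRouting_of_coloring C,
    fun ⟨_, hP⟩ => hP.nonempty_lineGraph_coloring hH⟩

end SimpleGraph

theorem edge_coloring_iff_routing_general
    {W : Type*} [Fintype W] (H : SimpleGraph W) [DecidableRel H.Adj]
    (hcubic : ∀ v : W, H.degree v = 3) :
    (∃ φ : Sym2 W → Fin 3, ∀ e₁ ∈ H.edgeSet, ∀ e₂ ∈ H.edgeSet, e₁ ≠ e₂ →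
        (∃ v : W, v ∈ e₁ ∧ v ∈ e₂) → φ e₁ ≠ φ e₂) ↔
    (∃ P : H.edgeSet → Σ u v : W ⊕ Fin 3, (completeBipartiteGraph W (Fin 3)).Walk u v,
      (∀ e, (P e).2.2.IsPath) ∧
      (∀ e : H.edgeSet, ∃ s t : W, (e : Sym2 W) = s(s, t) ∧
        (P e).1 = Sum.inl s ∧ (P e).2.1 = Sum.inl t) ∧
      (∀ e₁ e₂ : H.edgeSet, e₁ ≠ e₂ → ∀ x ∈ (P e₁).2.2.edges, x ∉ (P e₂).2.2.edges)) := by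
  rw [← nonempty_lineGraph_coloring_iff]
  exact nonempty_lineGraph_coloring_iff_exists_isEdgeDisjointRouting
    fun v => (hcubic v).trans (Fintype.card_fin 3).symm

/-- A cubic graph `H` admits a proper 3-edge-coloring if and only if, in
the complete bipartite graph with parts `{v1,v2,v3}` and `V(H)`, there is a family of
pairwise edge-disjoint paths containing, for each edge `{s,t}` of `H`, a path
connecting `s` and `t`. -/
theorem edge_coloring_iff_routing
    {W : Type*} [Fintype W] [DecidableEq W] (H : SimpleGraph W) [DecidableRel H.Adj]
    (hcubic : ∀ v : W, H.degree v = 3) :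
    (∃ φ : Sym2 W → Fin 3, ∀ e₁ ∈ H.edgeSet, ∀ e₂ ∈ H.edgeSet, e₁ ≠ e₂ →
        (∃ v : W, v ∈ e₁ ∧ v ∈ e₂) → φ e₁ ≠ φ e₂) ↔
    (∃ P : H.edgeSet → Σ u v : W ⊕ Fin 3, (completeBipartiteGraph W (Fin 3)).Walk u v,
      (∀ e, (P e).2.2.IsPath) ∧
      (∀ e : H.edgeSet, ∃ s t : W, (e : Sym2 W) = s(s, t) ∧
        (P e).1 = Sum.inl s ∧ (P e).2.1 = Sum.inl t) ∧
      (∀ e₁ e₂ : H.edgeSet, e₁ ≠ e₂ → ∀ x ∈ (P e₁).2.2.edges, x ∉ (P e₂).2.2.edges)) :=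
  edge_coloring_iff_routing_general H hcubic
end

section
/- Let H be a cubic graph on n vertices and let G be the complete bipartite graph with parts {v1, v2} and V(H). Then H admits a proper 3-edge-coloring if and only if there exists a family of n pairwise edge-disjoint paths in G, each connecting the endpoints of a distinct edge of H. -/
/-!
Colour classes `0` and `1` of a proper 3-edge-colouring of a cubic graph on `n` vertices form a
set `A` of `n` edges with a proper 2-colouring. Conversely, `n` properly 2-coloured edges meet
every vertex at most, hence by double counting exactly, twice; the remaining edges form a perfect
matching, which takes the third colour.

Routing each edge of `A` through `v₁` or `v₂` according to its colour gives edge-disjoint paths.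
Conversely, a routed path joins two vertices of the same side of `K_{2,n}`, so it has length at
least two; as `K_{2,n}` has only `2n` edges, every one of the `n` paths is `s — vᵢ — t`, and
edge-disjointness says precisely that `i` is a proper 2-colouring of the routed edges.
-/

open Finset SimpleGraph

def IsProperEdgeLabelling {V α : Type*} (A : Set (Sym2 V)) (c : Sym2 V → α) : Prop :=
  ∀ e₁ ∈ A, ∀ e₂ ∈ A, e₁ ≠ e₂ → (∃ v, v ∈ e₁ ∧ v ∈ e₂) → c e₁ ≠ c e₂

section Incidence

variable {V : Type*} [DecidableEq V]

theorem sum_card_filter_mem_eq_two_mul [Fintype V] {A : Finset (Sym2 V)}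
    (hA : ∀ e ∈ A, ¬e.IsDiag) :
    ∑ v, #{e ∈ A | v ∈ e} = 2 * #A := by
  calc ∑ v, #{e ∈ A | v ∈ e} = ∑ e ∈ A, #{v | v ∈ e} :=
        sum_card_bipartiteAbove_eq_sum_card_bipartiteBelow _
    _ = ∑ e ∈ A, 2 := sum_congr rfl fun e he ↦ by
        rw [← Sym2.card_toFinset_of_not_isDiag e (hA e he)]
        congr 1
        ext
        simp
    _ = 2 * #A := by rw [sum_const, smul_eq_mul, mul_comm]

theorem forall_card_filter_mem_eq_iff [Fintype V] {A : Finset (Sym2 V)}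
    (hA : ∀ e ∈ A, ¬e.IsDiag) {k : ℕ} (hk : ∀ v, #{e ∈ A | v ∈ e} ≤ k) :
    (∀ v, #{e ∈ A | v ∈ e} = k) ↔ 2 * #A = k * Fintype.card V := by
  rw [← sum_card_filter_mem_eq_two_mul hA, mul_comm, ← card_univ, ← smul_eq_mul, ← sum_const]
  simpa using (sum_eq_sum_iff_of_le (s := univ) fun v _ ↦ hk v).symm

theorem IsProperEdgeLabelling.injOn_filter_mem {α : Type*} {A : Finset (Sym2 V)}
    {c : Sym2 V → α} (hc : IsProperEdgeLabelling ↑A c) (v : V) :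
    Set.InjOn c ↑{e ∈ A | v ∈ e} := by
  intro e₁ he₁ e₂ he₂ hce
  simp only [mem_coe, mem_filter] at he₁ he₂
  by_contra hne
  exact hc e₁ he₁.1 e₂ he₂.1 hne ⟨v, he₁.2, he₂.2⟩ hce

theorem IsProperEdgeLabelling.card_filter_mem_le {α : Type*} [Fintype α] {A : Finset (Sym2 V)}
    {c : Sym2 V → α} (hc : IsProperEdgeLabelling ↑A c) (v : V) :
    #{e ∈ A | v ∈ e} ≤ Fintype.card α :=
  card_le_card_of_injOn c (fun _ _ ↦ mem_coe.2 (mem_univ _)) (hc.injOn_filter_mem v)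

end Incidence

section Cubic

variable {W : Type*} [Fintype W] [DecidableEq W] {H : SimpleGraph W} [DecidableRel H.Adj]

theorem exists_isProperEdgeLabelling_fin_two_of_fin_three (hH : H.IsRegularOfDegree 3)
    {φ : Sym2 W → Fin 3} (hφ : IsProperEdgeLabelling H.edgeSet φ) :
    ∃ A : Finset (Sym2 W), ↑A ⊆ H.edgeSet ∧ #A = Fintype.card W ∧
      ∃ c : Sym2 W → Fin 2, IsProperEdgeLabelling ↑A c := by
  set A : Finset (Sym2 W) := {e ∈ H.edgeFinset | φ e ≠ 2}
  have hAH : ↑A ⊆ H.edgeSet := fun e he ↦ mem_edgeFinset.1 (mem_filter.1 he).1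
  have hdiag : ∀ e ∈ A, ¬e.IsDiag := fun e he ↦ H.not_isDiag_of_mem_edgeSet (hAH he)
  have hdeg : ∀ v, #{e ∈ A | v ∈ e} = 2 := by
    intro v
    have hinj : Set.InjOn φ ↑(H.incidenceFinset v) := by
      rw [incidenceFinset_eq_filter]
      exact IsProperEdgeLabelling.injOn_filter_mem (by rwa [coe_edgeFinset]) v
    have himage : (H.incidenceFinset v).image φ = univ := eq_univ_of_card _ <| by
      rw [card_image_of_injOn hinj, card_incidenceFinset_eq_degree, hH v, Fintype.card_fin]
    calc #{e ∈ A | v ∈ e} = #{e ∈ H.incidenceFinset v | φ e ≠ 2} := by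
          rw [incidenceFinset_eq_filter, filter_filter, filter_filter]
          simp only [and_comm]
      _ = #{a ∈ (H.incidenceFinset v).image φ | a ≠ 2} := by
          rw [filter_image, card_image_of_injOn (hinj.mono (coe_subset.2 (filter_subset _ _)))]
      _ = 2 := by rw [himage]; rfl
  refine ⟨A, hAH, ?_, fun e ↦ if φ e = 0 then 0 else 1, ?_⟩
  · have := (forall_card_filter_mem_eq_iff hdiag fun v ↦ (hdeg v).le).1 hdeg
    omega
  · intro e₁ he₁ e₂ he₂ hne hv
    have hlabel : ∀ a b : Fin 3, a ≠ 2 → b ≠ 2 → a ≠ b →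
        (if a = 0 then (0 : Fin 2) else 1) ≠ (if b = 0 then 0 else 1) := by decide
    exact hlabel _ _ (mem_filter.1 he₁).2 (mem_filter.1 he₂).2 (hφ e₁ (hAH he₁) e₂ (hAH he₂) hne hv)

theorem exists_isProperEdgeLabelling_fin_three_of_fin_two (hH : H.IsRegularOfDegree 3)
    {A : Finset (Sym2 W)} (hAH : ↑A ⊆ H.edgeSet) (hA : #A = Fintype.card W)
    {c : Sym2 W → Fin 2} (hc : IsProperEdgeLabelling ↑A c) :
    ∃ φ : Sym2 W → Fin 3, IsProperEdgeLabelling H.edgeSet φ := by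
  have hdiag : ∀ e ∈ A, ¬e.IsDiag := fun e he ↦ H.not_isDiag_of_mem_edgeSet (hAH he)
  have hdeg : ∀ v, #{e ∈ A | v ∈ e} = 2 :=
    (forall_card_filter_mem_eq_iff hdiag fun v ↦
      (hc.card_filter_mem_le v).trans_eq (Fintype.card_fin 2)).2 (by rw [hA])
  have hout : ∀ v, #(H.incidenceFinset v \ A) = 1 := by
    intro v
    have hinter : A ∩ H.incidenceFinset v = {e ∈ A | v ∈ e} := by
      ext e
      simp only [mem_inter, mem_filter, incidenceFinset_eq_filter, mem_edgeFinset]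
      exact ⟨fun h ↦ ⟨h.1, h.2.2⟩, fun h ↦ ⟨h.1, hAH h.1, h.2⟩⟩
    rw [card_sdiff, hinter, hdeg, card_incidenceFinset_eq_degree, hH v]
  refine ⟨fun e ↦ if e ∈ A then (c e).castSucc else Fin.last 2, ?_⟩
  intro e₁ he₁ e₂ he₂ hne ⟨v, hv₁, hv₂⟩
  by_cases h₁ : e₁ ∈ A <;> by_cases h₂ : e₂ ∈ A <;> simp only [h₁, h₂, if_true, if_false]
  · exact Fin.castSucc_injective _ |>.ne (hc _ h₁ _ h₂ hne ⟨v, hv₁, hv₂⟩)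
  · exact Fin.castSucc_ne_last _
  · exact (Fin.castSucc_ne_last _).symm
  · refine absurd (card_le_one.1 (hout v).le e₁ ?_ e₂ ?_) hne <;>
      simp [incidenceFinset_eq_filter, *]

theorem exists_isProperEdgeLabelling_fin_three_iff (hH : H.IsRegularOfDegree 3) :
    (∃ φ : Sym2 W → Fin 3, IsProperEdgeLabelling H.edgeSet φ) ↔
      ∃ A : Finset (Sym2 W), ↑A ⊆ H.edgeSet ∧ #A = Fintype.card W ∧
        ∃ c : Sym2 W → Fin 2, IsProperEdgeLabelling ↑A c :=
  ⟨fun ⟨_, hφ⟩ ↦ exists_isProperEdgeLabelling_fin_two_of_fin_three hH hφ,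
    fun ⟨_, hAH, hA, _, hc⟩ ↦ exists_isProperEdgeLabelling_fin_three_of_fin_two hH hAH hA hc⟩

end Cubic

section Walks

variable {V : Type*} {G : SimpleGraph V}

theorem SimpleGraph.Walk.two_le_length_of_not_adj {u v : V} (p : G.Walk u v) (hne : u ≠ v)
    (hadj : ¬G.Adj u v) : 2 ≤ p.length := by
  by_contra! h
  obtain h | h : p.length = 0 ∨ p.length = 1 := by omega
  exacts [hne (p.eq_of_length_eq_zero h), hadj (p.adj_of_length_eq_one h)]

theorem sum_length_le_encard_edgeSet {ι : Type*} {S : Finset ι}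
    {P : ι → Σ u v : V, G.Walk u v} (hpath : ∀ i ∈ S, (P i).2.2.IsPath)
    (hdisj : ∀ i ∈ S, ∀ j ∈ S, i ≠ j → ∀ x ∈ (P i).2.2.edges, x ∉ (P j).2.2.edges) :
    ((∑ i ∈ S, (P i).2.2.length : ℕ) : ℕ∞) ≤ G.edgeSet.encard := by
  classical
  have hcard : ∀ i ∈ S, #(P i).2.2.edges.toFinset = (P i).2.2.length := fun i hi ↦
    (List.toFinset_card_of_nodup (hpath i hi).edges_nodup).trans (Walk.length_edges _)
  rw [← sum_congr rfl hcard, ← card_biUnion, ← Set.encard_coe_eq_coe_finsetCard]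
  · exact Set.encard_le_encard fun x hx ↦ by
      obtain ⟨i, -, hx⟩ := mem_biUnion.1 hx
      exact (P i).2.2.edges_subset_edgeSet (List.mem_toFinset.1 hx)
  · exact fun i hi j hj hij ↦ disjoint_left.2 fun x hxi hxj ↦
      hdisj i hi j hj hij x (List.mem_toFinset.1 hxi) (List.mem_toFinset.1 hxj)

end Walks

section CompleteBipartite

variable {V β : Type*}

def walkVia (s t : V) (i : β) : (completeBipartiteGraph V β).Walk (.inl s) (.inl t) :=
  .cons (v := .inr i) (by simp) (.cons (by simp) .nil)

theorem mem_edges_walkVia {s t : V} {i : β} {x : Sym2 (V ⊕ β)} :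
    x ∈ (walkVia s t i).edges ↔ ∃ v ∈ s(s, t), x = s(.inl v, .inr i) := by
  simp [walkVia, Sym2.eq_swap (a := Sum.inr i)]

theorem isPath_walkVia {s t : V} (hst : s ≠ t) (i : β) : (walkVia s t i).IsPath := by
  simp [walkVia, hst]

theorem exists_eq_walkVia_of_length_eq_two {s t : V}
    (p : (completeBipartiteGraph V β).Walk (.inl s) (.inl t)) (hp : p.length = 2) :
    ∃ i, p = walkVia s t i := by
  match p, hp with
  | .cons (v := .inr i) _ (.cons _ .nil), _ => exact ⟨i, rfl⟩
  | .cons (v := .inl _) h _, _ => simp at h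

end CompleteBipartite

section Routing

variable {W : Type*} [Fintype W] {H : SimpleGraph W}

theorem exists_routing_of_isProperEdgeLabelling {A : Finset (Sym2 W)} (hAH : ↑A ⊆ H.edgeSet)
    (hA : #A = Fintype.card W) {c : Sym2 W → Fin 2} (hc : IsProperEdgeLabelling ↑A c) :
    ∃ (S : Finset H.edgeSet)
        (P : H.edgeSet → Σ u v : W ⊕ Fin 2, (completeBipartiteGraph W (Fin 2)).Walk u v),
      S.card = Fintype.card W ∧
      (∀ e ∈ S, (P e).2.2.IsPath) ∧
      (∀ e ∈ S, ∃ s t : W, (e : Sym2 W) = s(s, t) ∧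
        (P e).1 = Sum.inl s ∧ (P e).2.1 = Sum.inl t) ∧
      (∀ e₁ ∈ S, ∀ e₂ ∈ S, e₁ ≠ e₂ → ∀ x ∈ (P e₁).2.2.edges, x ∉ (P e₂).2.2.edges) := by
  classical
  have hout (e : Sym2 W) : s(e.out.1, e.out.2) = e := e.out_eq
  refine ⟨A.subtype (· ∈ H.edgeSet), fun e ↦ ⟨_, _, walkVia e.1.out.1 e.1.out.2 (c e)⟩,
    ?_, fun e _ ↦ isPath_walkVia ?_ _, fun e _ ↦ ⟨_, _, (hout e).symm, rfl, rfl⟩, ?_⟩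
  · rw [card_subtype, filter_true_of_mem fun e he ↦ hAH he, hA]
  · have := H.not_isDiag_of_mem_edgeSet e.2
    rwa [← hout e.1, Sym2.mk_isDiag_iff] at this
  · intro e₁ he₁ e₂ he₂ hne x hx₁ hx₂
    obtain ⟨v₁, hv₁, rfl⟩ := mem_edges_walkVia.1 hx₁
    obtain ⟨v₂, hv₂, h⟩ := mem_edges_walkVia.1 hx₂
    simp only [Sym2.eq_iff, Sum.inl.injEq, Sum.inr.injEq, reduceCtorEq, and_false,
      or_false] at h
    rw [hout] at hv₁ hv₂
    exact hc e₁ (mem_subtype.1 he₁) e₂ (mem_subtype.1 he₂) (Subtype.coe_injective.ne hne)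
      ⟨v₁, hv₁, h.1 ▸ hv₂⟩ h.2

theorem exists_forall_mem_edges_of_routing (S : Finset H.edgeSet)
    (P : H.edgeSet → Σ u v : W ⊕ Fin 2, (completeBipartiteGraph W (Fin 2)).Walk u v)
    (hS : S.card = Fintype.card W) (hpath : ∀ e ∈ S, (P e).2.2.IsPath)
    (hends : ∀ e ∈ S, ∃ s t : W, (e : Sym2 W) = s(s, t) ∧
      (P e).1 = Sum.inl s ∧ (P e).2.1 = Sum.inl t)
    (hdisj : ∀ e₁ ∈ S, ∀ e₂ ∈ S, e₁ ≠ e₂ → ∀ x ∈ (P e₁).2.2.edges, x ∉ (P e₂).2.2.edges) :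
    ∀ e ∈ S, ∃ i, ∀ v ∈ (e : Sym2 W), s(.inl v, .inr i) ∈ (P e).2.2.edges := by
  have hwalk : ∀ e ∈ S, ∃ s t, (e : Sym2 W) = s(s, t) ∧
      ∃ p : (completeBipartiteGraph W (Fin 2)).Walk (.inl s) (.inl t),
        (P e).2.2.edges = p.edges := by
    intro e he
    obtain ⟨s, t, hst, hs, ht⟩ := hends e he
    exact ⟨s, t, hst, (P e).2.2.copy hs ht, (Walk.edges_copy ..).symm⟩
  have hlen_ge : ∀ e ∈ S, 2 ≤ (P e).2.2.length := by
    intro e he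
    obtain ⟨s, t, hst, p, hp⟩ := hwalk e he
    have hne : s ≠ t := by
      have := H.not_isDiag_of_mem_edgeSet e.2
      rwa [hst, Sym2.mk_isDiag_iff] at this
    rw [← Walk.length_edges, hp, Walk.length_edges]
    exact p.two_le_length_of_not_adj (by simpa using hne) (by simp)
  -- `n` paths of length at least two, edge-disjoint in a graph with `2 n` edges
  have hlen : ∀ e ∈ S, 2 = (P e).2.2.length := by
    refine (sum_eq_sum_iff_of_le hlen_ge).1 (le_antisymm (sum_le_sum hlen_ge) ?_)
    have := sum_length_le_encard_edgeSet hpath hdisj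
    rw [encard_edgeSet_completeBipartiteGraph, ENat.card_eq_coe_fintype_card,
      ENat.card_eq_coe_fintype_card, Fintype.card_fin] at this
    rw [sum_const, hS, smul_eq_mul]
    exact_mod_cast this
  intro e he
  obtain ⟨s, t, hst, p, hp⟩ := hwalk e he
  obtain ⟨i, rfl⟩ := exists_eq_walkVia_of_length_eq_two p
    (by rw [← Walk.length_edges, ← hp, Walk.length_edges]; exact (hlen e he).symm)
  exact ⟨i, fun v hv ↦ hp ▸ mem_edges_walkVia.2 ⟨v, hst ▸ hv, rfl⟩⟩

theorem exists_isProperEdgeLabelling_of_routing (S : Finset H.edgeSet)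
    (P : H.edgeSet → Σ u v : W ⊕ Fin 2, (completeBipartiteGraph W (Fin 2)).Walk u v)
    (hS : S.card = Fintype.card W) (hpath : ∀ e ∈ S, (P e).2.2.IsPath)
    (hends : ∀ e ∈ S, ∃ s t : W, (e : Sym2 W) = s(s, t) ∧
      (P e).1 = Sum.inl s ∧ (P e).2.1 = Sum.inl t)
    (hdisj : ∀ e₁ ∈ S, ∀ e₂ ∈ S, e₁ ≠ e₂ → ∀ x ∈ (P e₁).2.2.edges, x ∉ (P e₂).2.2.edges) :
    ∃ A : Finset (Sym2 W), ↑A ⊆ H.edgeSet ∧ #A = Fintype.card W ∧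
      ∃ c : Sym2 W → Fin 2, IsProperEdgeLabelling ↑A c := by
  choose! c hc using exists_forall_mem_edges_of_routing S P hS hpath hends hdisj
  refine ⟨S.map (.subtype _), fun e he ↦ ?_, by rw [card_map, hS],
    Function.extend Subtype.val c 0, ?_⟩
  · obtain ⟨e, -, rfl⟩ := mem_map.1 he
    exact e.2
  · intro e₁ he₁ e₂ he₂ hne ⟨v, hv₁, hv₂⟩ hce
    obtain ⟨e₁, hS₁, rfl⟩ := mem_map.1 he₁
    obtain ⟨e₂, hS₂, rfl⟩ := mem_map.1 he₂
    simp only [Function.Embedding.subtype_apply, Subtype.val_injective.extend_apply] at hce hne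
    exact hdisj e₁ hS₁ e₂ hS₂ (ne_of_apply_ne _ hne) _ (hc e₁ hS₁ v hv₁) (hce ▸ hc e₂ hS₂ v hv₂)

end Routing

/-- A cubic graph `H` on `n` vertices admits a proper 3-edge-coloring if
and only if, in the complete bipartite graph with parts `{v1,v2}` and `V(H)`, there is
a family of `n` pairwise edge-disjoint paths, each connecting the endpoints of a
distinct edge of `H`. -/
theorem edge_coloring_iff_routing_K2n
    {W : Type*} [Fintype W] [DecidableEq W] (H : SimpleGraph W) [DecidableRel H.Adj]
    (hcubic : ∀ v : W, H.degree v = 3) :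
    (∃ φ : Sym2 W → Fin 3, ∀ e₁ ∈ H.edgeSet, ∀ e₂ ∈ H.edgeSet, e₁ ≠ e₂ →
        (∃ v : W, v ∈ e₁ ∧ v ∈ e₂) → φ e₁ ≠ φ e₂) ↔
    (∃ (S : Finset H.edgeSet)
        (P : H.edgeSet → Σ u v : W ⊕ Fin 2, (completeBipartiteGraph W (Fin 2)).Walk u v),
      S.card = Fintype.card W ∧
      (∀ e ∈ S, (P e).2.2.IsPath) ∧
      (∀ e ∈ S, ∃ s t : W, (e : Sym2 W) = s(s, t) ∧
        (P e).1 = Sum.inl s ∧ (P e).2.1 = Sum.inl t) ∧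
      (∀ e₁ ∈ S, ∀ e₂ ∈ S, e₁ ≠ e₂ → ∀ x ∈ (P e₁).2.2.edges, x ∉ (P e₂).2.2.edges)) := by
  refine (exists_isProperEdgeLabelling_fin_three_iff hcubic).trans ⟨?_, ?_⟩
  · rintro ⟨A, hAH, hA, c, hc⟩
    exact exists_routing_of_isProperEdgeLabelling hAH hA hc
  · rintro ⟨S, P, hS, hpath, hends, hdisj⟩
    exact exists_isProperEdgeLabelling_of_routing S P hS hpath hends hdisj
end
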